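/- Let Q be a left quasigroup, N ≤ Dis(Q) an admissible subgroup which is semiregular, and α = O_N. Then for every x ∈ Q, Dis(Q)_{[x]_α} ≅ N ⋊ Dis(Q)_x and Dis^α ≅ N ⋊ Dis^α_x. -/

import Mathlib

/-! Basic theory of left quasigroups, following the paper. -/

structure LeftQuasigroup (Q : Type*) where
  op : Q → Q → Q
  ld : Q → Q → Q
  op_ld : ∀ x y, op x (ld x y) = y
  ld_op : ∀ x y, ld x (op x y) = y

/-- Orbit relation of a subgroup of permutations. -/
def orbRel {Q : Type*} (N : Subgroup (Equiv.Perm Q)) (x y : Q) : Prop := ∃ h ∈ N, h y = x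

/-- Orbit equivalence relation of a subgroup of permutations. -/
def orbSetoid {Q : Type*} (N : Subgroup (Equiv.Perm Q)) : Setoid Q where
  r := orbRel N
  iseqv := by
    constructor
    · exact fun x => ⟨1, N.one_mem, rfl⟩
    · rintro x y ⟨h, hN, rfl⟩
      exact ⟨h⁻¹, N.inv_mem hN, h.symm_apply_apply y⟩
    · rintro x y z ⟨h, hN, rfl⟩ ⟨g, gN, rfl⟩
      exact ⟨h * g, N.mul_mem hN gN, rfl⟩

/-- The subgroup of permutations moving every point inside its `α`-class. -/
def kerRel {Q : Type*} (α : Setoid Q) : Subgroup (Equiv.Perm Q) where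
  carrier := {g | ∀ x, α.r (g x) x}
  one_mem' := fun x => α.refl x
  mul_mem' := by
    intro a b ha hb x
    exact α.trans (ha (b x)) (hb x)
  inv_mem' := by
    intro a ha x
    have := ha (a⁻¹ x)
    rw [← Equiv.Perm.mul_apply, mul_inv_cancel, Equiv.Perm.one_apply] at this
    exact α.symm this

/-- Pointwise stabilizer of `x` in `N`. -/
def pstab {Q : Type*} (N : Subgroup (Equiv.Perm Q)) (x : Q) : Subgroup (Equiv.Perm Q) :=
  N ⊓ MulAction.stabilizer (Equiv.Perm Q) x

/-- Meet of a family of setoids. -/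
def infSetoid {Q I : Type*} (α : I → Setoid Q) : Setoid Q where
  r x y := ∀ i, (α i).r x y
  iseqv := ⟨fun x i => (α i).refl x, fun h i => (α i).symm (h i),
    fun h g i => (α i).trans (h i) (g i)⟩

namespace LeftQuasigroup

variable {Q : Type*} (S : LeftQuasigroup Q)

/-- Left translation as a permutation. -/
def L (x : Q) : Equiv.Perm Q := ⟨S.op x, S.ld x, S.ld_op x, S.op_ld x⟩

/-- The left multiplication group. -/
def LMlt : Subgroup (Equiv.Perm Q) := Subgroup.closure (Set.range S.L)

/-- The displacement group relative to a binary relation `r`. -/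
def disRel (r : Q → Q → Prop) : Subgroup (Equiv.Perm Q) :=
  Subgroup.closure {g | ∃ h ∈ S.LMlt, ∃ x y, r x y ∧ g = h * (S.L x * (S.L y)⁻¹) * h⁻¹}

/-- The displacement group. -/
def Dis : Subgroup (Equiv.Perm Q) := S.disRel fun _ _ => True

/-- `Dis^α`. -/
def disUp (α : Setoid Q) : Subgroup (Equiv.Perm Q) := S.Dis ⊓ kerRel α

/-- `LMlt^α`, the kernel of `π_α`. -/
def lmltKer (α : Setoid Q) : Subgroup (Equiv.Perm Q) := S.LMlt ⊓ kerRel α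

/-- Congruences of a left quasigroup. -/
structure IsCongruence (α : Setoid Q) : Prop where
  op_compat : ∀ {x y z w : Q}, α.r x y → α.r z w → α.r (S.op x z) (S.op y w)
  ld_compat : ∀ {x y z w : Q}, α.r x y → α.r z w → α.r (S.ld x z) (S.ld y w)

theorem L_mem_lmlt (x : Q) : S.L x ∈ S.LMlt := Subgroup.subset_closure ⟨x, rfl⟩

theorem disRel_le_lmlt (r : Q → Q → Prop) : S.disRel r ≤ S.LMlt := by
  refine (Subgroup.closure_le _).2 ?_
  rintro g ⟨h, hh, x, y, _, rfl⟩
  exact mul_mem (mul_mem hh (mul_mem (S.L_mem_lmlt x) (inv_mem (S.L_mem_lmlt y)))) (inv_mem hh)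

theorem lmlt_maps {α : Setoid Q} (hα : S.IsCongruence α) {g : Equiv.Perm Q}
    (hg : g ∈ S.LMlt) : ∀ x y, α.r x y → α.r (g x) (g y) := by
  have H : ∀ g ∈ S.LMlt,
      (∀ x y, α.r x y → α.r (g x) (g y)) ∧ (∀ x y, α.r x y → α.r (g⁻¹ x) (g⁻¹ y)) := by
    intro g hg
    induction hg using Subgroup.closure_induction with
    | mem g hgen =>
      obtain ⟨z, rfl⟩ := hgen
      constructor
      · intro x y h; exact hα.op_compat (α.refl z) h
      · intro x y h; exact hα.ld_compat (α.refl z) h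
    | one =>
      constructor <;> intro x y h <;> simpa using h
    | mul a b _ _ ha hb =>
      constructor
      · intro x y h
        exact ha.1 _ _ (hb.1 _ _ h)
      · intro x y h
        have := hb.2 _ _ (ha.2 _ _ h)
        simpa [mul_inv_rev] using this
    | inv a _ ha =>
      refine ⟨ha.2, ?_⟩
      intro x y h
      simpa using ha.1 x y h
  exact (H g hg).1

/-- The blockwise stabilizer `Dis(Q)_{[x]_α}`. -/
def blockStab (α : Setoid Q) (hα : S.IsCongruence α) (x : Q) : Subgroup (Equiv.Perm Q) where
  carrier := {g | g ∈ S.Dis ∧ α.r (g x) x}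
  one_mem' := ⟨S.Dis.one_mem, α.refl x⟩
  mul_mem' := by
    intro a b ha hb
    refine ⟨S.Dis.mul_mem ha.1 hb.1, ?_⟩
    exact α.trans (S.lmlt_maps hα (S.disRel_le_lmlt _ ha.1) _ _ hb.2) ha.2
  inv_mem' := by
    intro a ha
    refine ⟨S.Dis.inv_mem ha.1, ?_⟩
    have h2 := S.lmlt_maps hα (inv_mem (S.disRel_le_lmlt _ ha.1)) _ _ ha.2
    rw [← Equiv.Perm.mul_apply, inv_mul_cancel, Equiv.Perm.one_apply] at h2
    exact α.symm h2

/-- The admissible subgroups `Norm(Q)`. -/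
def Norm : Set (Subgroup (Equiv.Perm Q)) :=
  {N | N ≤ S.LMlt ∧ (∀ h ∈ S.LMlt, ∀ n ∈ N, h * n * h⁻¹ ∈ N) ∧ S.disRel (orbRel N) ≤ N}

/-- Image of a subgroup along the canonical projection `π_α`. -/
def piSub (α : Setoid Q) (N : Subgroup (Equiv.Perm Q)) : Subgroup (Equiv.Perm (Quotient α)) where
  carrier := {k | ∃ h ∈ N, ∀ x : Q, k (Quotient.mk α x) = Quotient.mk α (h x)}
  one_mem' := ⟨1, N.one_mem, fun _ => rfl⟩
  mul_mem' := by
    rintro a b ⟨ha, haN, hae⟩ ⟨hb, hbN, hbe⟩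
    refine ⟨ha * hb, N.mul_mem haN hbN, fun x => ?_⟩
    show a (b (Quotient.mk α x)) = _
    rw [hbe, hae]; rfl
  inv_mem' := by
    rintro a ⟨h, hN, he⟩
    refine ⟨h⁻¹, N.inv_mem hN, fun x => ?_⟩
    have h1 := he (h⁻¹ x)
    rw [← Equiv.Perm.mul_apply, mul_inv_cancel, Equiv.Perm.one_apply] at h1
    rw [← h1, ← Equiv.Perm.mul_apply, inv_mul_cancel, Equiv.Perm.one_apply]

/-- Preimage of a subgroup along the canonical projection `π_α`. -/
def piPre (α : Setoid Q) (K : Subgroup (Equiv.Perm (Quotient α))) : Subgroup (Equiv.Perm Q) where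
  carrier := {h | h ∈ S.LMlt ∧ ∃ k ∈ K, ∀ x : Q, k (Quotient.mk α x) = Quotient.mk α (h x)}
  one_mem' := ⟨S.LMlt.one_mem, 1, K.one_mem, fun _ => rfl⟩
  mul_mem' := by
    rintro a b ⟨haL, ka, kaK, hae⟩ ⟨hbL, kb, kbK, hbe⟩
    refine ⟨S.LMlt.mul_mem haL hbL, ka * kb, K.mul_mem kaK kbK, fun x => ?_⟩
    show ka (kb (Quotient.mk α x)) = _
    rw [hbe, hae]; rfl
  inv_mem' := by
    rintro a ⟨haL, k, kK, he⟩
    refine ⟨S.LMlt.inv_mem haL, k⁻¹, K.inv_mem kK, fun x => ?_⟩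
    have h1 := he (a⁻¹ x)
    rw [← Equiv.Perm.mul_apply, mul_inv_cancel, Equiv.Perm.one_apply] at h1
    rw [← h1, ← Equiv.Perm.mul_apply, inv_mul_cancel, Equiv.Perm.one_apply]

/-- Quotient left quasigroup. -/
def quotLQ (α : Setoid Q) (hα : S.IsCongruence α) : LeftQuasigroup (Quotient α) where
  op := Quotient.lift₂ (fun x y => Quotient.mk α (S.op x y))
    (fun _ _ _ _ h1 h2 => Quotient.sound (hα.op_compat h1 h2))
  ld := Quotient.lift₂ (fun x y => Quotient.mk α (S.ld x y))
    (fun _ _ _ _ h1 h2 => Quotient.sound (hα.ld_compat h1 h2))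
  op_ld := fun a b => Quotient.inductionOn₂ a b fun x y => congrArg (Quotient.mk α) (S.op_ld x y)
  ld_op := fun a b => Quotient.inductionOn₂ a b fun x y => congrArg (Quotient.mk α) (S.ld_op x y)

/-- Idempotent left quasigroup. -/
def Idem : Prop := ∀ x : Q, S.op x x = x

/-- Left distributive law (defining quandles among idempotent left quasigroups). -/
def Ldist : Prop := ∀ x y z : Q, S.op x (S.op y z) = S.op (S.op x y) (S.op x z)

/-- A left quasigroup is faithful if the Cayley kernel is trivial. -/
def Faithful : Prop := ∀ x y : Q, (∀ z, S.op x z = S.op y z) → x = y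

/-- Connected: `LMlt` acts transitively. -/
def Connected : Prop := ∀ x y : Q, ∃ h ∈ S.LMlt, h y = x

/-- Semiregular: `Dis` acts with trivial stabilizers. -/
def Semiregular : Prop := ∀ g ∈ S.Dis, ∀ x : Q, g x = x → g = 1

/-- Subalgebras. -/
def IsSubalgebra (A : Set Q) : Prop :=
  ∀ ⦃x⦄, x ∈ A → ∀ ⦃y⦄, y ∈ A → S.op x y ∈ A ∧ S.ld x y ∈ A

/-- The left quasigroup structure on a subalgebra. -/
def subLQ (A : Set Q) (hA : S.IsSubalgebra A) : LeftQuasigroup A where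
  op a b := ⟨S.op a b, (hA a.2 b.2).1⟩
  ld a b := ⟨S.ld a b, (hA a.2 b.2).2⟩
  op_ld a b := Subtype.ext (S.op_ld a b)
  ld_op a b := Subtype.ext (S.ld_op a b)

/-- Superconnected: every subalgebra is connected. -/
def Superconnected : Prop := ∀ (A : Set Q) (hA : S.IsSubalgebra A), (S.subLQ A hA).Connected

/-- Superfaithful: every subalgebra is faithful. -/
def Superfaithful : Prop := ∀ (A : Set Q) (hA : S.IsSubalgebra A), (S.subLQ A hA).Faithful

theorem infCong {I : Type*} {α : I → Setoid Q} (hc : ∀ i, S.IsCongruence (α i)) :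
    S.IsCongruence (infSetoid α) :=
  ⟨fun h1 h2 i => (hc i).op_compat (h1 i) (h2 i),
   fun h1 h2 i => (hc i).ld_compat (h1 i) (h2 i)⟩

end LeftQuasigroup

/-- Terms in the language of left quasigroups in `n` variables. -/
inductive LQTerm : ℕ → Type
  | var : ∀ {n}, Fin n → LQTerm n
  | op : ∀ {n}, LQTerm n → LQTerm n → LQTerm n
  | ld : ∀ {n}, LQTerm n → LQTerm n → LQTerm n

/-- Evaluation of terms. -/
def evalT {Q : Type*} (S : LeftQuasigroup Q) : ∀ {n}, LQTerm n → (Fin n → Q) → Q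
  | _, .var i, v => v i
  | _, .op t s, v => S.op (evalT S t v) (evalT S s v)
  | _, .ld t s, v => S.ld (evalT S t v) (evalT S s v)

/-- The centralizing relation `C(a, b; d)` of commutator theory. -/
def CC {Q : Type*} (S : LeftQuasigroup Q) (a b d : Q → Q → Prop) : Prop :=
  ∀ (n : ℕ) (t : LQTerm (n + 1)) (x y : Q) (z u : Fin n → Q),
    a x y → (∀ i, b (z i) (u i)) →
    d (evalT S t (Fin.cons x z)) (evalT S t (Fin.cons x u)) →
    d (evalT S t (Fin.cons y z)) (evalT S t (Fin.cons y u))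

/-- Nilpotency of length `n` in the sense of commutator theory: the ascending central
series (characterized congruence by congruence) reaches the full congruence at step `n`. -/
def LeftQuasigroup.NilpotentLength {Q : Type*} (S : LeftQuasigroup Q) (n : ℕ) : Prop :=
  ∃ c : ℕ → Setoid Q,
    (∀ k, S.IsCongruence (c k)) ∧
    (∀ x y : Q, (c 0).r x y ↔ x = y) ∧
    (∀ k, ∀ β : Setoid Q, S.IsCongruence β →
      (CC S β.r (fun _ _ => True) (c k).r ↔ β ≤ c (k + 1))) ∧
    (∀ x y : Q, (c n).r x y)


/-!
The orbits of `N` are the `α`-blocks and `N` acts regularly on each of them, so an element `g`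
of `Dis(Q)_{[x]_α}` (or of `Dis^α`) factors uniquely as `g = n h` with `n ∈ N` the element
sending `x` to `g x` and `h = n⁻¹ g` fixing `x`. Admissibility makes `N` normal in `LMlt(Q)`,
hence in both groups, so each is the internal semidirect product of `N` and the stabilizer of `x`.
-/

theorem Subgroup.exists_semidirectProduct_mulEquiv {P : Type*} [Group P] {G N K : Subgroup P}
    (hNG : N ≤ G) (hKG : K ≤ G) (hnorm : ∀ g ∈ G, ∀ n ∈ N, g * n * g⁻¹ ∈ N)
    (hdisj : Disjoint N K) (hdec : ∀ g ∈ G, ∃ n ∈ N, n⁻¹ * g ∈ K) :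
    ∃ φ : K →* MulAut N, Nonempty (G ≃* N ⋊[φ] K) := by
  have : (N.subgroupOf G).Normal := ⟨fun n hn g => hnorm g g.2 n hn⟩
  have hcompl : (N.subgroupOf G).IsComplement' (K.subgroupOf G) := by
    refine Subgroup.isComplement'_of_disjoint_and_mul_eq_univ ?_ ?_
    · exact Subgroup.disjoint_def.mpr fun hgN hgK =>
        Subtype.ext (Subgroup.disjoint_def.mp hdisj hgN hgK)
    · refine Set.eq_univ_of_forall fun g => ?_
      obtain ⟨n, hn, hk⟩ := hdec g g.2
      exact ⟨⟨n, hNG hn⟩, hn, ⟨n, hNG hn⟩⁻¹ * g, hk, mul_inv_cancel_left _ _⟩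
  exact ⟨_, ⟨(SemidirectProduct.mulEquivSubgroup hcompl).symm.trans
    (SemidirectProduct.congr' (Subgroup.subgroupOfEquivOfLe hNG)
      (Subgroup.subgroupOfEquivOfLe hKG))⟩⟩

theorem exists_semidirectProduct_pstab_mulEquiv {Q : Type*} {G H N : Subgroup (Equiv.Perm Q)}
    {x : Q} (hsemi : ∀ n ∈ N, n x = x → n = 1) (hNG : N ≤ G) (hstab : pstab H x ≤ G)
    (hGH : G ≤ H) (hnorm : ∀ g ∈ G, ∀ n ∈ N, g * n * g⁻¹ ∈ N)
    (horbit : ∀ g ∈ G, orbRel N (g x) x) :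
    ∃ φ : pstab H x →* MulAut N, Nonempty (G ≃* N ⋊[φ] pstab H x) := by
  refine Subgroup.exists_semidirectProduct_mulEquiv hNG hstab hnorm ?_ fun g hg => ?_
  · exact Subgroup.disjoint_def.mpr fun hn hnx => hsemi _ hn hnx.2
  · obtain ⟨n, hn, hnx⟩ := horbit g hg
    refine ⟨n, hn, H.mul_mem (H.inv_mem (hGH (hNG hn))) (hGH hg), ?_⟩
    simp [MulAction.mem_stabilizer_iff, Equiv.Perm.smul_def, ← hnx]

namespace LeftQuasigroup

variable {Q : Type*} (S : LeftQuasigroup Q)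

theorem blockStab_le_dis (α : Setoid Q) (hα : S.IsCongruence α) (x : Q) :
    S.blockStab α hα x ≤ S.Dis :=
  fun _ hg => hg.1

theorem disUp_le_blockStab (α : Setoid Q) (hα : S.IsCongruence α) (x : Q) :
    S.disUp α ≤ S.blockStab α hα x :=
  fun _ hg => ⟨hg.1, hg.2 x⟩

theorem pstab_dis_le_blockStab (α : Setoid Q) (hα : S.IsCongruence α) (x : Q) :
    pstab S.Dis x ≤ S.blockStab α hα x :=
  fun g hg => ⟨hg.1, by rw [show g x = x from hg.2]⟩

theorem le_disUp_orbSetoid {N : Subgroup (Equiv.Perm Q)} (hle : N ≤ S.Dis) :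
    N ≤ S.disUp (orbSetoid N) :=
  fun n hn => ⟨hle hn, fun _ => ⟨n, hn, rfl⟩⟩

end LeftQuasigroup

/-- for a semiregular admissible `N ≤ Dis(Q)` with `α = O_N`,
`Dis(Q)_{[x]_α} ≅ N ⋊ Dis(Q)_x` and `Dis^α ≅ N ⋊ Dis^α_x`. -/
theorem stmt13 {Q : Type*} (S : LeftQuasigroup Q) (N : Subgroup (Equiv.Perm Q))
    (hN : N ∈ S.Norm) (hle : N ≤ S.Dis)
    (hsemi : ∀ g ∈ N, ∀ x : Q, g x = x → g = 1)
    (hα : S.IsCongruence (orbSetoid N)) :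
    ∀ x : Q,
      (∃ φ : ↥(pstab S.Dis x) →* MulAut ↥N,
        Nonempty (↥(S.blockStab (orbSetoid N) hα x) ≃* ↥N ⋊[φ] ↥(pstab S.Dis x))) ∧
      (∃ ψ : ↥(pstab (S.disUp (orbSetoid N)) x) →* MulAut ↥N,
        Nonempty (↥(S.disUp (orbSetoid N)) ≃* ↥N ⋊[ψ] ↥(pstab (S.disUp (orbSetoid N)) x))) := by
  intro x
  have hnorm : ∀ g ∈ S.Dis, ∀ n ∈ N, g * n * g⁻¹ ∈ N :=
    fun g hg => hN.2.1 g (S.disRel_le_lmlt _ hg)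
  have hNdisUp := S.le_disUp_orbSetoid hle
  exact ⟨exists_semidirectProduct_pstab_mulEquiv (hsemi · · x)
      (hNdisUp.trans (S.disUp_le_blockStab _ hα x)) (S.pstab_dis_le_blockStab _ hα x)
      (S.blockStab_le_dis _ hα x) (fun g hg => hnorm g hg.1) fun _ hg => hg.2,
    exists_semidirectProduct_pstab_mulEquiv (hsemi · · x) hNdisUp inf_le_left le_rfl
      (fun g hg => hnorm g hg.1) fun _ hg => hg.2 x⟩
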